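/- arXiv:2008.01047 — 5 statements merged into one kernel-verified Lean document; each statement's English description precedes it below -/
import Mathlib

section
/- The span R = span{J₁, J₂, J₃, J₄, J₅} over any subfield K of F containing kρ² = kx² + ky² is closed under matrix multiplication and contains the 3×3 identity matrix I = J₁ + J₂; hence R is a (non-commutative) subring of the 3×3 matrix ring over F. -/
open Matrix

noncomputable section

/-- The nine matrices of the matrix basis; index `j : Fin 9` is `J_{j+1}`. -/
def Jm {R : Type*} [CommRing R] (kx ky i : R) : Fin 9 → Matrix (Fin 3) (Fin 3) R :=
  ![!![1,0,0; 0,1,0; 0,0,0],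
    !![0,0,0; 0,0,0; 0,0,1],
    !![0,0,i*kx; 0,0,i*ky; 0,0,0],
    !![0,0,0; 0,0,0; i*kx,i*ky,0],
    !![-kx^2,-(kx*ky),0; -(kx*ky),-ky^2,0; 0,0,0],
    !![0,0,0; 0,0,0; -(i*ky),i*kx,0],
    !![0,0,i*ky; 0,0,-(i*kx); 0,0,0],
    !![kx*ky,ky^2,0; -kx^2,-(kx*ky),0; 0,0,0],
    !![0,1,0; -1,0,0; 0,0,0]]

/-- Membership in the `K`-span of `J₁, …, J₅` (`R(K)` of the paper). -/
def inRspan {F : Type*} [Field F] (kx ky i : F) (K : Subfield F)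
    (A : Matrix (Fin 3) (Fin 3) F) : Prop :=
  ∃ a : Fin 5 → F, (∀ j, a j ∈ K) ∧
    A = ∑ j : Fin 5, a j • Jm kx ky i (Fin.castLE (by norm_num) j)


lemma Jm_cast0 {F : Type*} [Field F] (kx ky i : F) :
    Jm kx ky i (Fin.castLE (show (5:ℕ)≤9 by norm_num) (0:Fin 5)) =
      !![1,0,0; 0,1,0; 0,0,0] := rfl

lemma Jm_cast1 {F : Type*} [Field F] (kx ky i : F) :
    Jm kx ky i (Fin.castLE (show (5:ℕ)≤9 by norm_num) (1:Fin 5)) =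
      !![0,0,0; 0,0,0; 0,0,1] := rfl

lemma Jm_cast2 {F : Type*} [Field F] (kx ky i : F) :
    Jm kx ky i (Fin.castLE (show (5:ℕ)≤9 by norm_num) (2:Fin 5)) =
      !![0,0,i*kx; 0,0,i*ky; 0,0,0] := rfl

lemma Jm_cast3 {F : Type*} [Field F] (kx ky i : F) :
    Jm kx ky i (Fin.castLE (show (5:ℕ)≤9 by norm_num) (3:Fin 5)) =
      !![0,0,0; 0,0,0; i*kx,i*ky,0] := rfl

lemma Jm_cast4 {F : Type*} [Field F] (kx ky i : F) :
    Jm kx ky i (Fin.castLE (show (5:ℕ)≤9 by norm_num) (4:Fin 5)) =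
      !![-kx^2,-(kx*ky),0; -(kx*ky),-ky^2,0; 0,0,0] := rfl

lemma sum_Jm_eq {F : Type*} [Field F] (kx ky i : F) (a : Fin 5 → F) :
    ∑ j : Fin 5, a j • Jm kx ky i (Fin.castLE (by norm_num) j) =
    !![a 0 - a 4 * kx^2, -(a 4 * (kx*ky)), a 2 * (i*kx);
       -(a 4 * (kx*ky)), a 0 - a 4 * ky^2, a 2 * (i*ky);
       a 3 * (i*kx), a 3 * (i*ky), a 1] := by
  rw [Fin.sum_univ_five, Jm_cast0, Jm_cast1, Jm_cast2, Jm_cast3, Jm_cast4]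
  ext r c
  fin_cases r <;> fin_cases c <;> simp [Matrix.vecHead, Matrix.vecTail] <;> ring

/-- `R(K) = span_K{J₁,…,J₅}` is closed under matrix multiplication and
contains the identity matrix `I = J₁ + J₂`; hence it is a subring of the `3×3`
matrix ring over `F`. -/
theorem Rspan_closed_under_mul_and_contains_one {F : Type*} [Field F]
    (kx ky i : F) (hi : i ^ 2 = -1) (K : Subfield F) (hK : kx^2 + ky^2 ∈ K) :
    (∀ A B : Matrix (Fin 3) (Fin 3) F,
      inRspan kx ky i K A → inRspan kx ky i K B → inRspan kx ky i K (A * B)) ∧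
    (1 : Matrix (Fin 3) (Fin 3) F) = Jm kx ky i 0 + Jm kx ky i 1 ∧
    inRspan kx ky i K (1 : Matrix (Fin 3) (Fin 3) F) := by
  set s : F := kx^2 + ky^2 with hs
  refine ⟨?_, ?_, ?_⟩
  · rintro A B ⟨a, ha, rfl⟩ ⟨b, hb, rfl⟩
    refine ⟨![a 0 * b 0,
              a 1 * b 1 - s * (a 3 * b 2),
              a 0 * b 2 + a 2 * b 1 - s * (a 4 * b 2),
              a 3 * b 0 + a 1 * b 3 - s * (a 3 * b 4),
              a 0 * b 4 + a 2 * b 3 + a 4 * b 0 - s * (a 4 * b 4)], ?_, ?_⟩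
    · intro j
      fin_cases j <;>
        simp only [Matrix.cons_val_zero, Matrix.cons_val_one, Matrix.head_cons,
          Matrix.cons_val_fin_one, Fin.isValue] <;>
      · first
        | exact K.mul_mem (ha _) (hb _)
        | (refine K.sub_mem ?_ (K.mul_mem hK (K.mul_mem (ha _) (hb _)))
           first
           | exact K.mul_mem (ha _) (hb _)
           | exact K.add_mem (K.mul_mem (ha _) (hb _)) (K.mul_mem (ha _) (hb _))
           | exact K.add_mem (K.add_mem (K.mul_mem (ha _) (hb _))
               (K.mul_mem (ha _) (hb _))) (K.mul_mem (ha _) (hb _)))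
    · rw [sum_Jm_eq, sum_Jm_eq, sum_Jm_eq]
      ext r c
      rw [Matrix.mul_apply]
      fin_cases r <;> fin_cases c <;>
        simp [Fin.sum_univ_three, hs] <;>
        ring_nf <;> simp [hi] <;> ring
  · ext r c
    fin_cases r <;> fin_cases c <;>
      simp [Jm, Matrix.one_apply, Matrix.vecHead, Matrix.vecTail]
  · refine ⟨![1, 1, 0, 0, 0], ?_, ?_⟩
    · intro j
      fin_cases j <;> simp <;> first | exact one_mem K | exact zero_mem K
    · rw [sum_Jm_eq]
      ext r c
      fin_cases r <;> fin_cases c <;>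
        simp [Matrix.one_apply, Matrix.vecHead, Matrix.vecTail]
end
end

section
/- For the spaces R = span_K{J₁,…,J₅} and I = span_K{J₆,…,J₉} (K a subfield of F containing kρ²), the following product rules hold: if A ∈ R and B ∈ R then A·B ∈ R; if A ∈ R and B ∈ I then A·B ∈ I; if A ∈ I and B ∈ R then A·B ∈ I; and if A ∈ I and B ∈ I then A·B ∈ R. -/
open Matrix

noncomputable section

/-- Membership in the `K`-span of `J₆, …, J₉` (`I(K)` of the paper). -/
def inIspan {F : Type*} [Field F] (kx ky i : F) (K : Subfield F)
    (A : Matrix (Fin 3) (Fin 3) F) : Prop :=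
  ∃ a : Fin 4 → F, (∀ j, a j ∈ K) ∧
    A = ∑ j : Fin 4, a j • Jm kx ky i (⟨5 + (j : ℕ), by omega⟩ : Fin 9)


lemma sumR {F : Type*} [Field F] (kx ky i : F) (a : Fin 5 → F) :
    (∑ j : Fin 5, a j • Jm kx ky i (Fin.castLE (by norm_num) j)) =
    !![a 0 - a 4*kx^2, -(a 4*(kx*ky)), a 2*(i*kx);
       -(a 4*(kx*ky)), a 0 - a 4*ky^2, a 2*(i*ky);
       a 3*(i*kx), a 3*(i*ky), a 1] := by
  rw [Fin.sum_univ_five]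
  show (a 0 • !![(1:F),0,0; 0,1,0; 0,0,0] + a 1 • !![0,0,0; 0,0,0; 0,0,1]
    + a 2 • !![0,0,i*kx; 0,0,i*ky; 0,0,0] + a 3 • !![0,0,0; 0,0,0; i*kx,i*ky,0]
    + a 4 • !![-kx^2,-(kx*ky),0; -(kx*ky),-ky^2,0; 0,0,0]) = _
  ext r c
  fin_cases r <;> fin_cases c <;> simp [Matrix.vecHead, Matrix.vecTail] <;> ring

lemma sumI {F : Type*} [Field F] (kx ky i : F) (a : Fin 4 → F) :
    (∑ j : Fin 4, a j • Jm kx ky i (⟨5 + (j : ℕ), by omega⟩ : Fin 9)) =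
    !![a 2*(kx*ky), a 2*ky^2 + a 3, a 1*(i*ky);
       -(a 2*kx^2) - a 3, -(a 2*(kx*ky)), -(a 1*(i*kx));
       -(a 0*(i*ky)), a 0*(i*kx), 0] := by
  rw [Fin.sum_univ_four]
  show (a 0 • !![(0:F),0,0; 0,0,0; -(i*ky),i*kx,0]
    + a 1 • !![0,0,i*ky; 0,0,-(i*kx); 0,0,0]
    + a 2 • !![kx*ky,ky^2,0; -kx^2,-(kx*ky),0; 0,0,0]
    + a 3 • !![0,1,0; -1,0,0; 0,0,0]) = _
  ext r c
  fin_cases r <;> fin_cases c <;> simp [Matrix.vecHead, Matrix.vecTail] <;> ring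

lemma mem5 {F : Type*} [Field F] (K : Subfield F) {x0 x1 x2 x3 x4 : F}
    (h0 : x0 ∈ K) (h1 : x1 ∈ K) (h2 : x2 ∈ K) (h3 : x3 ∈ K) (h4 : x4 ∈ K) :
    ∀ j : Fin 5, ![x0,x1,x2,x3,x4] j ∈ K := by
  intro j; fin_cases j
  exacts [h0, h1, h2, h3, h4]

lemma mem4 {F : Type*} [Field F] (K : Subfield F) {x0 x1 x2 x3 : F}
    (h0 : x0 ∈ K) (h1 : x1 ∈ K) (h2 : x2 ∈ K) (h3 : x3 ∈ K) :
    ∀ j : Fin 4, ![x0,x1,x2,x3] j ∈ K := by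
  intro j; fin_cases j
  exacts [h0, h1, h2, h3]

set_option maxHeartbeats 1600000 in
/-- product rules — `R·R ⊆ R`, `R·I ⊆ I`, `I·R ⊆ I`, `I·I ⊆ R`. -/
theorem matrix_basis_product_rules {F : Type*} [Field F]
    (kx ky i : F) (hi : i ^ 2 = -1) (K : Subfield F) (hK : kx^2 + ky^2 ∈ K) :
    (∀ A B : Matrix (Fin 3) (Fin 3) F,
      inRspan kx ky i K A → inRspan kx ky i K B → inRspan kx ky i K (A * B)) ∧
    (∀ A B : Matrix (Fin 3) (Fin 3) F,
      inRspan kx ky i K A → inIspan kx ky i K B → inIspan kx ky i K (A * B)) ∧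
    (∀ A B : Matrix (Fin 3) (Fin 3) F,
      inIspan kx ky i K A → inRspan kx ky i K B → inIspan kx ky i K (A * B)) ∧
    (∀ A B : Matrix (Fin 3) (Fin 3) F,
      inIspan kx ky i K A → inIspan kx ky i K B → inRspan kx ky i K (A * B)) := by
  refine ⟨?_, ?_, ?_, ?_⟩
  · rintro A B ⟨a, ha, rfl⟩ ⟨b, hb, rfl⟩
    refine ⟨![a 0 * b 0,
       a 1 * b 1 - (kx^2+ky^2) * (a 3 * b 2),
       a 0 * b 2 + a 2 * b 1 - (kx^2+ky^2) * (a 4 * b 2),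
       a 1 * b 3 + a 3 * b 0 - (kx^2+ky^2) * (a 3 * b 4),
       a 0 * b 4 + a 2 * b 3 + a 4 * b 0 - (kx^2+ky^2) * (a 4 * b 4)],
      mem5 K (mul_mem (ha 0) (hb 0))
        (sub_mem (mul_mem (ha 1) (hb 1)) (mul_mem hK (mul_mem (ha 3) (hb 2))))
        (sub_mem (add_mem (mul_mem (ha 0) (hb 2)) (mul_mem (ha 2) (hb 1)))
          (mul_mem hK (mul_mem (ha 4) (hb 2))))
        (sub_mem (add_mem (mul_mem (ha 1) (hb 3)) (mul_mem (ha 3) (hb 0)))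
          (mul_mem hK (mul_mem (ha 3) (hb 4))))
        (sub_mem (add_mem (add_mem (mul_mem (ha 0) (hb 4)) (mul_mem (ha 2) (hb 3)))
          (mul_mem (ha 4) (hb 0))) (mul_mem hK (mul_mem (ha 4) (hb 4)))), ?_⟩
    rw [sumR kx ky i a, sumR kx ky i b, sumR kx ky i]
    have hii : i * i = -1 := by rw [← sq]; exact hi
    ext r c
    fin_cases r <;> fin_cases c <;>
      simp [Matrix.mul_apply, Fin.sum_univ_three, Matrix.vecHead, Matrix.vecTail] <;>
      ring_nf <;> simp [hi, hii] <;> ring_nf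
  · rintro A B ⟨a, ha, rfl⟩ ⟨b, hb, rfl⟩
    refine ⟨![a 1 * b 0 + a 3 * b 3,
       a 0 * b 1,
       a 0 * b 2 + a 2 * b 0 + a 4 * b 3,
       a 0 * b 3 - (kx^2+ky^2) * (a 2 * b 0) - (kx^2+ky^2) * (a 4 * b 3)],
      mem4 K (add_mem (mul_mem (ha 1) (hb 0)) (mul_mem (ha 3) (hb 3)))
        (mul_mem (ha 0) (hb 1))
        (add_mem (add_mem (mul_mem (ha 0) (hb 2)) (mul_mem (ha 2) (hb 0)))
          (mul_mem (ha 4) (hb 3)))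
        (sub_mem (sub_mem (mul_mem (ha 0) (hb 3)) (mul_mem hK (mul_mem (ha 2) (hb 0))))
          (mul_mem hK (mul_mem (ha 4) (hb 3)))), ?_⟩
    rw [sumR kx ky i a, sumI kx ky i b, sumI kx ky i]
    have hii : i * i = -1 := by rw [← sq]; exact hi
    ext r c
    fin_cases r <;> fin_cases c <;>
      simp [Matrix.mul_apply, Fin.sum_univ_three, Matrix.vecHead, Matrix.vecTail] <;>
      ring_nf <;> simp [hi, hii] <;> ring_nf
  · rintro A B ⟨a, ha, rfl⟩ ⟨b, hb, rfl⟩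
    refine ⟨![a 0 * b 0,
       a 1 * b 1 + (kx^2+ky^2) * (a 2 * b 2) + a 3 * b 2,
       a 2 * b 0 - a 1 * b 3 - (kx^2+ky^2) * (a 2 * b 4) - a 3 * b 4,
       a 3 * b 0],
      mem4 K (mul_mem (ha 0) (hb 0))
        (add_mem (add_mem (mul_mem (ha 1) (hb 1)) (mul_mem hK (mul_mem (ha 2) (hb 2))))
          (mul_mem (ha 3) (hb 2)))
        (sub_mem (sub_mem (sub_mem (mul_mem (ha 2) (hb 0)) (mul_mem (ha 1) (hb 3)))
          (mul_mem hK (mul_mem (ha 2) (hb 4))))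
          (mul_mem (ha 3) (hb 4)))
        (mul_mem (ha 3) (hb 0)), ?_⟩
    rw [sumI kx ky i a, sumR kx ky i b, sumI kx ky i]
    have hii : i * i = -1 := by rw [← sq]; exact hi
    ext r c
    fin_cases r <;> fin_cases c <;>
      simp [Matrix.mul_apply, Fin.sum_univ_three, Matrix.vecHead, Matrix.vecTail] <;>
      ring_nf <;> simp [hi, hii] <;> ring_nf
  · rintro A B ⟨a, ha, rfl⟩ ⟨b, hb, rfl⟩
    refine ⟨![(kx^2+ky^2) * (a 1 * b 0) - (kx^2+ky^2) * (a 2 * b 3) - a 3 * b 3,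
       (kx^2+ky^2) * (a 0 * b 1),
       -(a 3 * b 1),
       -((kx^2+ky^2) * (a 0 * b 2)) - a 0 * b 3,
       a 1 * b 0 - a 2 * b 3 + a 3 * b 2],
      mem5 K
        (sub_mem (sub_mem (mul_mem hK (mul_mem (ha 1) (hb 0)))
          (mul_mem hK (mul_mem (ha 2) (hb 3)))) (mul_mem (ha 3) (hb 3)))
        (mul_mem hK (mul_mem (ha 0) (hb 1)))
        (neg_mem (mul_mem (ha 3) (hb 1)))
        (sub_mem (neg_mem (mul_mem hK (mul_mem (ha 0) (hb 2)))) (mul_mem (ha 0) (hb 3)))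
        (add_mem (sub_mem (mul_mem (ha 1) (hb 0)) (mul_mem (ha 2) (hb 3)))
          (mul_mem (ha 3) (hb 2))), ?_⟩
    rw [sumI kx ky i a, sumI kx ky i b, sumR kx ky i]
    have hii : i * i = -1 := by rw [← sq]; exact hi
    ext r c
    fin_cases r <;> fin_cases c <;>
      simp [Matrix.mul_apply, Fin.sum_univ_three, Matrix.vecHead, Matrix.vecTail] <;>
      ring_nf <;> simp [hi, hii] <;> ring_nf
end
end

section
/- The kernel characterization for the Maxwell radiation condition: over the field F = ℂ(kx, ky, kz) with kz a square root of k² − kρ² (k a nonzero parameter), the 3×3 matrix M = J₁ + (kρ²/k²)·J₂ + (1/k²)·J₅ − (i·kz/k²)·J₃ − (i·kz/k²)·J₄ has rank 2, and its right kernel (as a map on 3×1 column vectors) is spanned by the vector ∇⁻ = (i·kx, i·ky, −i·kz)ᵀ; consequently, the 3×3 solutions G of M·G = 0 are exactly the matrices of the form ∇⁻ · vᵀ for v a 3×1 vector. -/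
/-!
With `∇⁻ = (i kx, i ky, -i kz)` one has `∇⁻ ⬝ ∇⁻ = -k² ≠ 0`, and
`M = 1 - (∇⁻ ⬝ ∇⁻)⁻¹ ∇⁻ ∇⁻ᵀ` is the projection along `∇⁻` onto its orthogonal complement for
the (non-Hermitian) dot product. Hence `M x = x - (∇⁻ ⬝ x / ∇⁻ ⬝ ∇⁻) ∇⁻` vanishes exactly on the
line through `∇⁻`, rank–nullity gives rank `3 - 1 = 2`, and `M G = 0` says that every column of
`G` lies on that line.
-/

open Matrix

noncomputable section

namespace Matrix

theorem mul_eq_zero_iff_eq_vecMulVec {R : Type*} [CommSemiring R] {l m n : Type*} [Fintype n]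
    {A : Matrix m n R} {w : n → R} (hA : ∀ x, A *ᵥ x = 0 ↔ ∃ c : R, x = c • w)
    (G : Matrix n l R) : A * G = 0 ↔ ∃ v, G = vecMulVec w v := by
  constructor
  · intro hG
    have hcol : ∀ j, ∃ c, (fun r => G r j) = c • w := fun j =>
      (hA _).1 (funext fun a => congrFun (congrFun hG a) j)
    choose c hc using hcol
    refine ⟨c, ext fun a b => ?_⟩
    rw [vecMulVec_apply, mul_comm, ← smul_eq_mul, ← Pi.smul_apply, ← hc]
  · rintro ⟨v, rfl⟩
    rw [mul_vecMulVec, (hA w).2 ⟨1, (one_smul R w).symm⟩, zero_vecMulVec]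

section Projection

variable {K n : Type*} [Field K] [Fintype n] [DecidableEq n] {w : n → K}

theorem one_sub_smul_vecMulVec_mulVec (c : K) (x : n → K) :
    (1 - c • vecMulVec w w) *ᵥ x = x - (c * (w ⬝ᵥ x)) • w := by
  rw [sub_mulVec, one_mulVec, smul_mulVec, vecMulVec_mulVec, op_smul_eq_smul, smul_smul]

theorem one_sub_smul_vecMulVec_mulVec_eq_zero_iff (hw : w ⬝ᵥ w ≠ 0) (x : n → K) :
    (1 - (w ⬝ᵥ w)⁻¹ • vecMulVec w w) *ᵥ x = 0 ↔ ∃ c : K, x = c • w := by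
  rw [one_sub_smul_vecMulVec_mulVec, sub_eq_zero]
  refine ⟨fun h => ⟨_, h⟩, ?_⟩
  rintro ⟨c, rfl⟩
  rw [dotProduct_smul, smul_eq_mul, mul_left_comm, inv_mul_cancel₀ hw, mul_one]

theorem ker_one_sub_smul_vecMulVec (hw : w ⬝ᵥ w ≠ 0) :
    LinearMap.ker (1 - (w ⬝ᵥ w)⁻¹ • vecMulVec w w).mulVecLin = K ∙ w := by
  ext x
  simp only [LinearMap.mem_ker, mulVecLin_apply, Submodule.mem_span_singleton]
  rw [one_sub_smul_vecMulVec_mulVec_eq_zero_iff hw]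
  exact exists_congr fun c => eq_comm

theorem rank_one_sub_smul_vecMulVec (hw : w ⬝ᵥ w ≠ 0) :
    (1 - (w ⬝ᵥ w)⁻¹ • vecMulVec w w).rank = Fintype.card n - 1 := by
  have hw0 : w ≠ 0 := by rintro rfl; simp at hw
  have := LinearMap.finrank_range_add_finrank_ker (1 - (w ⬝ᵥ w)⁻¹ • vecMulVec w w).mulVecLin
  rw [ker_one_sub_smul_vecMulVec hw, finrank_span_singleton hw0,
    Module.finrank_fintype_fun_eq_card] at this
  rw [rank]
  omega

end Projection

end Matrix

theorem dotProduct_self_nablaMinus {F : Type*} [Field F] (kx ky kz i : F) (hi : i ^ 2 = -1) :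
    ![i*kx, i*ky, -(i*kz)] ⬝ᵥ ![i*kx, i*ky, -(i*kz)] = -(kx^2 + ky^2 + kz^2) := by
  simp only [dotProduct, Fin.sum_univ_three, cons_val]
  linear_combination (kx^2 + ky^2 + kz^2) * hi

theorem radiation_matrix_eq_one_sub_smul_vecMulVec {F : Type*} [Field F] (kx ky kz i : F)
    (hi : i ^ 2 = -1) (hk : kx^2 + ky^2 + kz^2 ≠ 0) :
    Jm kx ky i 0 + ((kx^2 + ky^2)/(kx^2 + ky^2 + kz^2)) • Jm kx ky i 1
      + (1/(kx^2 + ky^2 + kz^2)) • Jm kx ky i 4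
      - ((i*kz)/(kx^2 + ky^2 + kz^2)) • Jm kx ky i 2
      - ((i*kz)/(kx^2 + ky^2 + kz^2)) • Jm kx ky i 3
      = 1 - (![i*kx, i*ky, -(i*kz)] ⬝ᵥ ![i*kx, i*ky, -(i*kz)])⁻¹ •
          vecMulVec ![i*kx, i*ky, -(i*kz)] ![i*kx, i*ky, -(i*kz)] := by
  rw [dotProduct_self_nablaMinus kx ky kz i hi, inv_neg, neg_smul, sub_neg_eq_add]
  ext a b
  fin_cases a <;> fin_cases b <;>
    simp only [Jm, one_apply, Fin.zero_eta, Fin.mk_one, Fin.reduceFinMk, Matrix.add_apply,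
      Matrix.sub_apply, Matrix.smul_apply, vecMulVec_apply, of_apply, cons_val, cons_val_zero,
      cons_val_one, smul_eq_mul, Fin.isValue, Fin.reduceEq, reduceIte] <;>
    field_simp <;> rw [hi] <;> ring

theorem radiation_condition_kernel_general {F : Type*} [Field F]
    (kx ky kz i : F) (hi : i ^ 2 = -1)
    (hk : kx^2 + ky^2 + kz^2 ≠ 0)
    (M : Matrix (Fin 3) (Fin 3) F)
    (hM : M = Jm kx ky i 0 + ((kx^2 + ky^2)/(kx^2 + ky^2 + kz^2)) • Jm kx ky i 1
      + (1/(kx^2 + ky^2 + kz^2)) • Jm kx ky i 4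
      - ((i*kz)/(kx^2 + ky^2 + kz^2)) • Jm kx ky i 2
      - ((i*kz)/(kx^2 + ky^2 + kz^2)) • Jm kx ky i 3) :
    M.rank = 2 ∧
    (∀ G : Matrix (Fin 3) (Fin 3) F,
      M * G = 0 ↔ ∃ v : Fin 3 → F, G = vecMulVec ![i*kx, i*ky, -(i*kz)] v) := by
  have hnabla : ![i*kx, i*ky, -(i*kz)] ⬝ᵥ ![i*kx, i*ky, -(i*kz)] ≠ 0 := by
    rw [dotProduct_self_nablaMinus kx ky kz i hi]
    exact neg_ne_zero.2 hk
  rw [hM, radiation_matrix_eq_one_sub_smul_vecMulVec kx ky kz i hi hk]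
  exact ⟨rank_one_sub_smul_vecMulVec hnabla,
    mul_eq_zero_iff_eq_vecMulVec (one_sub_smul_vecMulVec_mulVec_eq_zero_iff hnabla)⟩

/-- the matrix
`M = J₁ + (kρ²/k²)·J₂ + (1/k²)·J₅ − (i·kz/k²)·J₃ − (i·kz/k²)·J₄`
has rank `2`, and the `3×3` solutions of `M·G = 0` are exactly the outer
products `∇⁻ · vᵀ` with `∇⁻ = (i·kx, i·ky, −i·kz)ᵀ`. -/
theorem radiation_condition_kernel {F : Type*} [Field F] [CharZero F]
    (kx ky kz i : F) (hi : i ^ 2 = -1)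
    (hk : kx^2 + ky^2 + kz^2 ≠ 0) (hkz : kz ≠ 0)
    (M : Matrix (Fin 3) (Fin 3) F)
    (hM : M = Jm kx ky i 0 + ((kx^2 + ky^2)/(kx^2 + ky^2 + kz^2)) • Jm kx ky i 1
      + (1/(kx^2 + ky^2 + kz^2)) • Jm kx ky i 4
      - ((i*kz)/(kx^2 + ky^2 + kz^2)) • Jm kx ky i 2
      - ((i*kz)/(kx^2 + ky^2 + kz^2)) • Jm kx ky i 3) :
    M.rank = 2 ∧
    (∀ G : Matrix (Fin 3) (Fin 3) F,
      M * G = 0 ↔ ∃ v : Fin 3 → F, G = vecMulVec ![i*kx, i*ky, -(i*kz)] v) :=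
  radiation_condition_kernel_general kx ky kz i hi hk M hM
end
end

section
/- Verification of the frequency-domain free-space elastic Green's function: for z ≠ z', the matrix-valued function Ĝ(z) = (1/(ω²ρ))·(k_s²·J₁ + kρ²·J₂ + i·k_{sz}·τ·J₃ + i·k_{sz}·τ·J₄ + J₅)·ĝ_s − (1/(ω²ρ))·(−k_{cz}²·J₂ + i·k_{cz}·τ·J₃ + i·k_{cz}·τ·J₄ + J₅)·ĝ_c, where τ = sign(z−z'), ĝ_s = i·e^{i·k_{sz}|z−z'|}/(2k_{sz}), ĝ_c = i·e^{i·k_{cz}|z−z'|}/(2k_{cz}), satisfies the homogeneous frequency-domain elastic ODE (μ·J₁ + γ·J₂)·Ĝ'' + (λ+μ)·(J₃+J₄)·Ĝ' + (μ·k_{sz}²·(J₁+J₂) + (λ+μ)·J₅)·Ĝ = 0 on each of the intervals z > z' and z < z'. -/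
open Matrix

noncomputable section

/-- derivative of the complex exponential of a real variable -/
lemma hasDerivAt_cexp_aux (c : ℂ) (z' : ℝ) (t : ℝ) :
    HasDerivAt (fun s : ℝ => Complex.exp (c * ((s : ℂ) - (z' : ℂ))))
      (c * Complex.exp (c * ((t : ℂ) - (z' : ℂ)))) t := by
  have h1 : HasDerivAt (fun w : ℂ => c * (w - (z' : ℂ))) c (t : ℝ) := by
    simpa using ((hasDerivAt_id ((t : ℝ) : ℂ)).sub_const ((z' : ℝ) : ℂ)).const_mul c
  have h2 : HasDerivAt (fun w : ℂ => Complex.exp (c * (w - (z' : ℂ))))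
      (Complex.exp (c * ((t : ℂ) - (z' : ℂ))) * c) (t : ℝ) :=
    (Complex.hasDerivAt_exp _).comp _ h1
  simpa [mul_comm] using h2.comp_ofReal

set_option maxHeartbeats 1600000 in
set_option maxRecDepth 8000 in
theorem free_space_elastic_green_satisfies_ODE
    (ω ρ lam μ γ : ℂ) (hω : ω ≠ 0) (hρ : ρ ≠ 0) (hlam : lam ≠ 0) (hμ : μ ≠ 0)
    (hγ : γ = lam + 2*μ)
    (kx ky ks2 kc2 ksz kcz : ℂ)
    (hks : μ * ks2 = ω^2 * ρ) (hkc : γ * kc2 = ω^2 * ρ)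
    (hksz : ksz^2 = ks2 - (kx^2 + ky^2)) (hkcz : kcz^2 = kc2 - (kx^2 + ky^2))
    (hksz0 : ksz ≠ 0) (hkcz0 : kcz ≠ 0)
    (z' : ℝ) (G : ℝ → Matrix (Fin 3) (Fin 3) ℂ)
    (hG : ∀ z : ℝ, G z =
      ((Complex.I * Complex.exp (Complex.I * ksz * (|z - z'| : ℝ)) / (2*ksz)) / (ω^2*ρ)) •
        (ks2 • Jm kx ky Complex.I 0 + (kx^2 + ky^2) • Jm kx ky Complex.I 1
          + (Complex.I * ksz * (if z' < z then 1 else -1)) • Jm kx ky Complex.I 2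
          + (Complex.I * ksz * (if z' < z then 1 else -1)) • Jm kx ky Complex.I 3
          + Jm kx ky Complex.I 4)
      - ((Complex.I * Complex.exp (Complex.I * kcz * (|z - z'| : ℝ)) / (2*kcz)) / (ω^2*ρ)) •
        ((-kcz^2) • Jm kx ky Complex.I 1
          + (Complex.I * kcz * (if z' < z then 1 else -1)) • Jm kx ky Complex.I 2
          + (Complex.I * kcz * (if z' < z then 1 else -1)) • Jm kx ky Complex.I 3
          + Jm kx ky Complex.I 4)) :
    ∀ z : ℝ, z ≠ z' →
      (μ • Jm kx ky Complex.I 0 + γ • Jm kx ky Complex.I 1) *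
          (Matrix.of fun a b => deriv (fun t => deriv (fun u => G u a b) t) z)
        + (lam + μ) • ((Jm kx ky Complex.I 2 + Jm kx ky Complex.I 3) *
            (Matrix.of fun a b => deriv (fun t => G t a b) z))
        + ((μ * ksz^2) • (Jm kx ky Complex.I 0 + Jm kx ky Complex.I 1)
            + (lam + μ) • Jm kx ky Complex.I 4) * G z = 0 := by
  subst hγ
  obtain rfl : ks2 = ksz^2 + (kx^2 + ky^2) := by linear_combination -hksz
  obtain rfl : kc2 = kcz^2 + (kx^2 + ky^2) := by linear_combination -hkcz
  have hR : μ * (ksz^2 + (kx^2 + ky^2)) = (lam + 2*μ) * (kcz^2 + (kx^2 + ky^2)) :=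
    hks.trans hkc.symm
  intro z hz
  obtain ⟨τ, hτ2, hev⟩ : ∃ τ : ℂ, τ^2 = 1 ∧ ∀ᶠ t in nhds z,
      (((|t - z'| : ℝ) : ℂ) = τ * ((t : ℂ) - (z' : ℂ))
        ∧ (if z' < t then (1:ℂ) else -1) = τ) := by
    rcases hz.lt_or_gt with h | h
    · refine ⟨-1, by ring, ?_⟩
      filter_upwards [eventually_lt_nhds h] with t ht
      constructor
      · rw [abs_of_neg (sub_neg.mpr ht)]
        push_cast; ring
      · rw [if_neg (not_lt.mpr ht.le)]
    · refine ⟨1, one_pow 2, ?_⟩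
      filter_upwards [eventually_gt_nhds h] with t ht
      constructor
      · rw [abs_of_pos (sub_pos.mpr ht)]
        push_cast; ring
      · rw [if_pos ht]
  set A : Matrix (Fin 3) (Fin 3) ℂ :=
    (ksz^2 + (kx^2 + ky^2)) • Jm kx ky Complex.I 0 + (kx^2 + ky^2) • Jm kx ky Complex.I 1
      + (Complex.I * ksz * τ) • Jm kx ky Complex.I 2
      + (Complex.I * ksz * τ) • Jm kx ky Complex.I 3
      + Jm kx ky Complex.I 4 with hA
  set B : Matrix (Fin 3) (Fin 3) ℂ :=
    (-kcz^2) • Jm kx ky Complex.I 1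
      + (Complex.I * kcz * τ) • Jm kx ky Complex.I 2
      + (Complex.I * kcz * τ) • Jm kx ky Complex.I 3
      + Jm kx ky Complex.I 4 with hB
  set es : ℝ → ℂ := fun t =>
    Complex.I * Complex.exp (Complex.I * ksz * (τ * ((t : ℂ) - (z' : ℂ)))) / (2*ksz) / (ω^2*ρ)
    with hes_def
  set ec : ℝ → ℂ := fun t =>
    Complex.I * Complex.exp (Complex.I * kcz * (τ * ((t : ℂ) - (z' : ℂ)))) / (2*kcz) / (ω^2*ρ)
    with hec_def
  have hes : ∀ t : ℝ, HasDerivAt es (Complex.I * ksz * τ * es t) t := by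
    intro t
    have h0 : HasDerivAt (fun s : ℝ => Complex.exp (Complex.I * ksz * τ * ((s:ℂ) - (z':ℂ))))
        (Complex.I * ksz * τ * Complex.exp (Complex.I * ksz * τ * ((t:ℂ) - (z':ℂ)))) t :=
      hasDerivAt_cexp_aux _ _ _
    have h1 := ((h0.const_mul Complex.I).div_const (2*ksz)).div_const (ω^2*ρ)
    have h2 : HasDerivAt es
        (Complex.I * (Complex.I * ksz * τ *
          Complex.exp (Complex.I * ksz * τ * ((t:ℂ) - (z':ℂ)))) / (2*ksz) / (ω^2*ρ)) t := by
      refine h1.congr_of_eventuallyEq (Filter.Eventually.of_forall fun s => ?_)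
      rw [hes_def]; ring_nf
    have h3 : Complex.I * (Complex.I * ksz * τ *
          Complex.exp (Complex.I * ksz * τ * ((t:ℂ) - (z':ℂ)))) / (2*ksz) / (ω^2*ρ)
        = Complex.I * ksz * τ * es t := by
      rw [hes_def]; ring_nf
    rwa [h3] at h2
  have hec : ∀ t : ℝ, HasDerivAt ec (Complex.I * kcz * τ * ec t) t := by
    intro t
    have h0 : HasDerivAt (fun s : ℝ => Complex.exp (Complex.I * kcz * τ * ((s:ℂ) - (z':ℂ))))
        (Complex.I * kcz * τ * Complex.exp (Complex.I * kcz * τ * ((t:ℂ) - (z':ℂ)))) t :=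
      hasDerivAt_cexp_aux _ _ _
    have h1 := ((h0.const_mul Complex.I).div_const (2*kcz)).div_const (ω^2*ρ)
    have h2 : HasDerivAt ec
        (Complex.I * (Complex.I * kcz * τ *
          Complex.exp (Complex.I * kcz * τ * ((t:ℂ) - (z':ℂ)))) / (2*kcz) / (ω^2*ρ)) t := by
      refine h1.congr_of_eventuallyEq (Filter.Eventually.of_forall fun s => ?_)
      rw [hec_def]; ring_nf
    have h3 : Complex.I * (Complex.I * kcz * τ *
          Complex.exp (Complex.I * kcz * τ * ((t:ℂ) - (z':ℂ)))) / (2*kcz) / (ω^2*ρ)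
        = Complex.I * kcz * τ * ec t := by
      rw [hec_def]; ring_nf
    rwa [h3] at h2
  have hGH : ∀ᶠ t in nhds z, G t = es t • A - ec t • B := by
    filter_upwards [hev] with t ht
    obtain ⟨h1, h2⟩ := ht
    rw [hG t, h1, h2, hA, hB, hes_def, hec_def]
  have hGHe : ∀ a b : Fin 3, (fun t => G t a b) =ᶠ[nhds z]
      (fun t => es t * A a b - ec t * B a b) := by
    intro a b
    filter_upwards [hGH] with t ht
    rw [ht]
    simp [Matrix.sub_apply, Matrix.smul_apply, smul_eq_mul]
  have key1 : ∀ a b : Fin 3, deriv (fun t => G t a b) z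
      = (Complex.I * ksz * τ * es z) * A a b - (Complex.I * kcz * τ * ec z) * B a b := by
    intro a b
    rw [(hGHe a b).deriv_eq]
    exact (((hes z).mul_const (A a b)).sub ((hec z).mul_const (B a b))).deriv
  have key2 : ∀ a b : Fin 3, deriv (fun t => deriv (fun u => G u a b) t) z
      = ((Complex.I * ksz * τ)^2 * es z) * A a b
        - ((Complex.I * kcz * τ)^2 * ec z) * B a b := by
    intro a b
    have hde : deriv (fun u => G u a b) =ᶠ[nhds z]
        (fun t => (Complex.I * ksz * τ * es t) * A a b
          - (Complex.I * kcz * τ * ec t) * B a b) := by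
      filter_upwards [(hGHe a b).deriv] with t ht
      rw [ht]
      exact (((hes t).mul_const (A a b)).sub ((hec t).mul_const (B a b))).deriv
    rw [hde.deriv_eq]
    have hd : HasDerivAt (fun t => (Complex.I * ksz * τ * es t) * A a b
          - (Complex.I * kcz * τ * ec t) * B a b)
        ((Complex.I * ksz * τ * (Complex.I * ksz * τ * es z)) * A a b
          - (Complex.I * kcz * τ * (Complex.I * kcz * τ * ec z)) * B a b) z :=
      (((hes z).const_mul (Complex.I * ksz * τ)).mul_const (A a b)).sub
        (((hec z).const_mul (Complex.I * kcz * τ)).mul_const (B a b))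
    rw [hd.deriv]
    ring
  have hM2 : (Matrix.of fun a b => deriv (fun t => deriv (fun u => G u a b) t) z)
      = ((Complex.I * ksz * τ)^2 * es z) • A - ((Complex.I * kcz * τ)^2 * ec z) • B := by
    ext a b
    rw [Matrix.of_apply, key2]
    simp [Matrix.sub_apply, Matrix.smul_apply, smul_eq_mul]
  have hM1 : (Matrix.of fun a b => deriv (fun t => G t a b) z)
      = (Complex.I * ksz * τ * es z) • A - (Complex.I * kcz * τ * ec z) • B := by
    ext a b
    rw [Matrix.of_apply, key1]
    simp [Matrix.sub_apply, Matrix.smul_apply, smul_eq_mul]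
  have hM0 : G z = es z • A - ec z • B := hGH.self_of_nhds
  rw [hM2, hM1, hM0]
  have hI : Complex.I^2 = -1 := Complex.I_sq
  set Es := es z with hEs
  set Ec := ec z with hEc
  clear hM2 hM1 hM0 key1 key2 hGHe hGH hes hec hG hev
  rw [hA, hB]
  have e0 : Jm kx ky Complex.I 0 = !![1,0,0; 0,1,0; 0,0,0] := rfl
  have e1 : Jm kx ky Complex.I 1 = !![0,0,0; 0,0,0; 0,0,1] := rfl
  have e2 : Jm kx ky Complex.I 2 = !![0,0,Complex.I*kx; 0,0,Complex.I*ky; 0,0,0] := rfl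
  have e3 : Jm kx ky Complex.I 3 = !![0,0,0; 0,0,0; Complex.I*kx,Complex.I*ky,0] := rfl
  have e4 : Jm kx ky Complex.I 4 =
      !![-kx^2,-(kx*ky),0; -(kx*ky),-ky^2,0; 0,0,0] := rfl
  rw [e0, e1, e2, e3, e4]
  have hf2 : (⟨2, by norm_num⟩ : Fin 3) = (2 : Fin 3) := rfl
  ext a b
  fin_cases a <;> fin_cases b <;>
    simp only [hf2, Fin.mk_zero, Fin.mk_one, Matrix.mul_apply, Fin.sum_univ_three,
      Matrix.add_apply, Matrix.sub_apply, Matrix.smul_apply, smul_eq_mul, Matrix.zero_apply,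
      Matrix.cons_val', Matrix.cons_val_zero, Matrix.cons_val_one, Matrix.cons_val_two,
      Matrix.head_cons, Matrix.tail_cons, Matrix.empty_val', Matrix.cons_val_fin_one,
      Matrix.head_fin_const, Matrix.of_apply, Fin.isValue]
  · linear_combination (τ^2*μ*ksz^4*Es + τ^2*μ*ky^2*ksz^2*Es + 2*τ^2*μ*kx^2*kcz^2*Ec + -1*τ^2*μ*kx^2*ksz^2*Es + τ^2*lam*kx^2*kcz^2*Ec + -1*τ^2*lam*kx^2*ksz^2*Es + -1*Complex.I^2*τ^2*μ*kx^2*kcz^2*Ec + Complex.I^2*τ^2*μ*kx^2*ksz^2*Es + -1*Complex.I^2*τ^2*lam*kx^2*kcz^2*Ec + Complex.I^2*τ^2*lam*kx^2*ksz^2*Es) * hI + (-1*μ*ksz^4*Es + -1*μ*ky^2*ksz^2*Es + -2*μ*kx^2*kcz^2*Ec + μ*kx^2*ksz^2*Es + -1*lam*kx^2*kcz^2*Ec + lam*kx^2*ksz^2*Es) * hτ2 + (kx^2*Ec) * hR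
  · linear_combination (2*τ^2*μ*kx*ky*kcz^2*Ec + -2*τ^2*μ*kx*ky*ksz^2*Es + τ^2*lam*kx*ky*kcz^2*Ec + -1*τ^2*lam*kx*ky*ksz^2*Es + -1*Complex.I^2*τ^2*μ*kx*ky*kcz^2*Ec + Complex.I^2*τ^2*μ*kx*ky*ksz^2*Es + -1*Complex.I^2*τ^2*lam*kx*ky*kcz^2*Ec + Complex.I^2*τ^2*lam*kx*ky*ksz^2*Es) * hI + (-2*μ*kx*ky*kcz^2*Ec + 2*μ*kx*ky*ksz^2*Es + -1*lam*kx*ky*kcz^2*Ec + lam*kx*ky*ksz^2*Es) * hτ2 + (kx*ky*Ec) * hR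
  · linear_combination (τ*μ*kx*kcz^3*Ec + -1*τ*μ*kx*ksz^2*kcz*Ec + τ*μ*kx*ksz^3*Es + τ*μ*kx*ky^2*kcz*Ec + τ*μ*kx^3*kcz*Ec + τ*lam*kx*kcz^3*Ec + τ*lam*kx*ky^2*kcz*Ec + τ*lam*kx^3*kcz*Ec + τ^3*μ*kx*kcz^3*Ec + -1*τ^3*μ*kx*ksz^3*Es + -1*Complex.I^2*τ^3*μ*kx*kcz^3*Ec + Complex.I^2*τ^3*μ*kx*ksz^3*Es) * hI + (-1*τ*μ*kx*kcz^3*Ec + τ*μ*kx*ksz^3*Es) * hτ2 + (τ*kx*kcz*Ec) * hR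
  · linear_combination (2*τ^2*μ*kx*ky*kcz^2*Ec + -2*τ^2*μ*kx*ky*ksz^2*Es + τ^2*lam*kx*ky*kcz^2*Ec + -1*τ^2*lam*kx*ky*ksz^2*Es + -1*Complex.I^2*τ^2*μ*kx*ky*kcz^2*Ec + Complex.I^2*τ^2*μ*kx*ky*ksz^2*Es + -1*Complex.I^2*τ^2*lam*kx*ky*kcz^2*Ec + Complex.I^2*τ^2*lam*kx*ky*ksz^2*Es) * hI + (-2*μ*kx*ky*kcz^2*Ec + 2*μ*kx*ky*ksz^2*Es + -1*lam*kx*ky*kcz^2*Ec + lam*kx*ky*ksz^2*Es) * hτ2 + (kx*ky*Ec) * hR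
  · linear_combination (τ^2*μ*ksz^4*Es + 2*τ^2*μ*ky^2*kcz^2*Ec + -1*τ^2*μ*ky^2*ksz^2*Es + τ^2*μ*kx^2*ksz^2*Es + τ^2*lam*ky^2*kcz^2*Ec + -1*τ^2*lam*ky^2*ksz^2*Es + -1*Complex.I^2*τ^2*μ*ky^2*kcz^2*Ec + Complex.I^2*τ^2*μ*ky^2*ksz^2*Es + -1*Complex.I^2*τ^2*lam*ky^2*kcz^2*Ec + Complex.I^2*τ^2*lam*ky^2*ksz^2*Es) * hI + (-1*μ*ksz^4*Es + -2*μ*ky^2*kcz^2*Ec + μ*ky^2*ksz^2*Es + -1*μ*kx^2*ksz^2*Es + -1*lam*ky^2*kcz^2*Ec + lam*ky^2*ksz^2*Es) * hτ2 + (ky^2*Ec) * hR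
  · linear_combination (τ*μ*ky*kcz^3*Ec + -1*τ*μ*ky*ksz^2*kcz*Ec + τ*μ*ky*ksz^3*Es + τ*μ*ky^3*kcz*Ec + τ*μ*kx^2*ky*kcz*Ec + τ*lam*ky*kcz^3*Ec + τ*lam*ky^3*kcz*Ec + τ*lam*kx^2*ky*kcz*Ec + τ^3*μ*ky*kcz^3*Ec + -1*τ^3*μ*ky*ksz^3*Es + -1*Complex.I^2*τ^3*μ*ky*kcz^3*Ec + Complex.I^2*τ^3*μ*ky*ksz^3*Es) * hI + (-1*τ*μ*ky*kcz^3*Ec + τ*μ*ky*ksz^3*Es) * hτ2 + (τ*ky*kcz*Ec) * hR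
  · linear_combination (-1*τ*μ*kx*ksz^2*kcz*Ec + 2*τ*μ*kx*ksz^3*Es + τ*μ*kx*ky^2*kcz*Ec + τ*μ*kx^3*kcz*Ec + τ*lam*kx*ksz^3*Es + τ*lam*kx*ky^2*kcz*Ec + τ*lam*kx^3*kcz*Ec + 2*τ^3*μ*kx*kcz^3*Ec + -2*τ^3*μ*kx*ksz^3*Es + τ^3*lam*kx*kcz^3*Ec + -1*τ^3*lam*kx*ksz^3*Es + -2*Complex.I^2*τ^3*μ*kx*kcz^3*Ec + 2*Complex.I^2*τ^3*μ*kx*ksz^3*Es + -1*Complex.I^2*τ^3*lam*kx*kcz^3*Ec + Complex.I^2*τ^3*lam*kx*ksz^3*Es) * hI + (-2*τ*μ*kx*kcz^3*Ec + 2*τ*μ*kx*ksz^3*Es + -1*τ*lam*kx*kcz^3*Ec + τ*lam*kx*ksz^3*Es) * hτ2 + (τ*kx*kcz*Ec) * hR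
  · linear_combination (-1*τ*μ*ky*ksz^2*kcz*Ec + 2*τ*μ*ky*ksz^3*Es + τ*μ*ky^3*kcz*Ec + τ*μ*kx^2*ky*kcz*Ec + τ*lam*ky*ksz^3*Es + τ*lam*ky^3*kcz*Ec + τ*lam*kx^2*ky*kcz*Ec + 2*τ^3*μ*ky*kcz^3*Ec + -2*τ^3*μ*ky*ksz^3*Es + τ^3*lam*ky*kcz^3*Ec + -1*τ^3*lam*ky*ksz^3*Es + -2*Complex.I^2*τ^3*μ*ky*kcz^3*Ec + 2*Complex.I^2*τ^3*μ*ky*ksz^3*Es + -1*Complex.I^2*τ^3*lam*ky*kcz^3*Ec + Complex.I^2*τ^3*lam*ky*ksz^3*Es) * hI + (-2*τ*μ*ky*kcz^3*Ec + 2*τ*μ*ky*ksz^3*Es + -1*τ*lam*ky*kcz^3*Ec + τ*lam*ky*ksz^3*Es) * hτ2 + (τ*ky*kcz*Ec) * hR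
  · linear_combination (2*τ^2*μ*kcz^4*Ec + τ^2*μ*ky^2*kcz^2*Ec + τ^2*μ*ky^2*ksz^2*Es + τ^2*μ*kx^2*kcz^2*Ec + τ^2*μ*kx^2*ksz^2*Es + τ^2*lam*kcz^4*Ec + τ^2*lam*ky^2*kcz^2*Ec + τ^2*lam*kx^2*kcz^2*Ec + -1*Complex.I^2*τ^2*μ*ky^2*kcz^2*Ec + Complex.I^2*τ^2*μ*ky^2*ksz^2*Es + -1*Complex.I^2*τ^2*μ*kx^2*kcz^2*Ec + Complex.I^2*τ^2*μ*kx^2*ksz^2*Es + -1*Complex.I^2*τ^2*lam*ky^2*kcz^2*Ec + Complex.I^2*τ^2*lam*ky^2*ksz^2*Es + -1*Complex.I^2*τ^2*lam*kx^2*kcz^2*Ec + Complex.I^2*τ^2*lam*kx^2*ksz^2*Es) * hI + (-2*μ*kcz^4*Ec + -1*μ*ky^2*kcz^2*Ec + -1*μ*ky^2*ksz^2*Es + -1*μ*kx^2*kcz^2*Ec + -1*μ*kx^2*ksz^2*Es + -1*lam*kcz^4*Ec + -1*lam*ky^2*kcz^2*Ec + -1*lam*kx^2*kcz^2*Ec)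 * hτ2 + (kcz^2*Ec) * hR
end
end

section
/- General solution of the frequency-domain homogeneous elastic ODE: every matrix-valued function of the form Ĝ(z) = Σ_{∗∈{↑,↓}} [ (−τ∗·i·k_{sz}·J₁ + J₄)·e^{τ∗·i·k_{sz}·z} + (τ∗·i·k_{cz}·J₂ + J₃)·e^{τ∗·i·k_{cz}·z} ]·X∗, with constant 3×3 matrices X↑, X↓ and τ↑ = +1, τ↓ = −1, satisfies (μ·J₁ + γ·J₂)·Ĝ'' + (λ+μ)·(J₃+J₄)·Ĝ' + (μ·k_{sz}²·(J₁+J₂) + (λ+μ)·J₅)·Ĝ = 0 for all z. -/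
open Matrix

noncomputable section
set_option maxHeartbeats 2000000

lemma hexp' (c : ℂ) (z : ℝ) : HasDerivAt (fun t : ℝ => Complex.exp (c * t)) (c * Complex.exp (c * z)) z := by
  have h1 : HasDerivAt (fun w : ℂ => Complex.exp (c * w)) (Complex.exp (c * z) * (c * 1)) (z : ℂ) :=
    (Complex.hasDerivAt_exp (c * z)).comp _ ((hasDerivAt_id _).const_mul c)
  simpa [mul_comm] using h1.comp_ofReal

lemma combo' (P Q K N X : Matrix (Fin 3) (Fin 3) ℂ) (s c e : ℂ)
    (h : c^2 • (P * N) + (c*s) • (Q * N) + K * N = 0) :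
    P * ((c^2*e) • (N*X)) + s • (Q * ((c*e) • (N*X))) + K * (e • (N*X)) = 0 := by
  have h' : c^2 • (P * (N*X)) + (c*s) • (Q * (N*X)) + K * (N*X) = 0 := by
    have h2 := congrArg (fun M => M * X) h
    simpa only [Matrix.add_mul, Matrix.smul_mul, Matrix.mul_assoc, Matrix.zero_mul] using h2
  calc P * ((c^2*e) • (N*X)) + s • (Q * ((c*e) • (N*X))) + K * (e • (N*X))
      = e • (c^2 • (P * (N*X)) + (c*s) • (Q * (N*X)) + K * (N*X)) := by
        simp only [Matrix.mul_smul, smul_add, smul_smul]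
        module
    _ = 0 := by rw [h', smul_zero]

lemma coreS (kx ky ksz lam μ c : ℂ) (hc : c^2 = -(ksz^2)) :
    c^2 • ((μ • Jm kx ky Complex.I 0 + (lam+2*μ) • Jm kx ky Complex.I 1) *
        ((-c) • Jm kx ky Complex.I 0 + Jm kx ky Complex.I 3))
    + (c*(lam+μ)) • ((Jm kx ky Complex.I 2 + Jm kx ky Complex.I 3) *
        ((-c) • Jm kx ky Complex.I 0 + Jm kx ky Complex.I 3))
    + ((μ*ksz^2) • (Jm kx ky Complex.I 0 + Jm kx ky Complex.I 1) + (lam+μ) • Jm kx ky Complex.I 4) *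
        ((-c) • Jm kx ky Complex.I 0 + Jm kx ky Complex.I 3) = 0 := by
  ext a b
  fin_cases a <;> fin_cases b <;>
    simp [Jm, Matrix.mul_apply, Fin.sum_univ_succ, Matrix.add_apply, Matrix.smul_apply,
      Matrix.vecHead, Matrix.vecTail, smul_eq_mul]
  all_goals
    first
      | ring1
      | linear_combination (c*μ*kx^2 + c*lam*kx^2) * Complex.I_sq + (-c*μ) * hc
      | linear_combination (c*μ*ky^2 + c*lam*ky^2) * Complex.I_sq + (-c*μ) * hc
      | linear_combination (c*lam*kx*ky + c*μ*kx*ky) * Complex.I_sq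
      | linear_combination (μ*Complex.I*kx) * hc
      | linear_combination (μ*Complex.I*ky) * hc

lemma coreP (kx ky ksz kcz lam μ γ c : ℂ) (hc : c^2 = -(kcz^2))
    (f1 : μ*ksz^2 - γ*kcz^2 - (lam+μ)*(kx^2+ky^2) = 0)
    (f2 : μ*ksz^2 - μ*kcz^2 - (lam+μ)*(kcz^2+kx^2+ky^2) = 0) :
    c^2 • ((μ • Jm kx ky Complex.I 0 + γ • Jm kx ky Complex.I 1) *
        (c • Jm kx ky Complex.I 1 + Jm kx ky Complex.I 2))
    + (c*(lam+μ)) • ((Jm kx ky Complex.I 2 + Jm kx ky Complex.I 3) *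
        (c • Jm kx ky Complex.I 1 + Jm kx ky Complex.I 2))
    + ((μ*ksz^2) • (Jm kx ky Complex.I 0 + Jm kx ky Complex.I 1) + (lam+μ) • Jm kx ky Complex.I 4) *
        (c • Jm kx ky Complex.I 1 + Jm kx ky Complex.I 2) = 0 := by
  ext a b
  fin_cases a <;> fin_cases b <;>
    simp [Jm, Matrix.mul_apply, Fin.sum_univ_succ, Matrix.add_apply, Matrix.smul_apply,
      Matrix.vecHead, Matrix.vecTail, smul_eq_mul]
  all_goals
    first
      | ring1
      | linear_combination (Complex.I*kx) * f2 + ((lam+2*μ)*Complex.I*kx) * hc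
      | linear_combination (Complex.I*ky) * f2 + ((lam+2*μ)*Complex.I*ky) * hc
      | linear_combination (c*(lam+μ)*(kx^2+ky^2)) * Complex.I_sq + c * f1 + (c*γ) * hc
/-- every matrix-valued function of the general-solution form
`Ĝ(z) = Σ_{∗∈{↑,↓}} [(−τ∗ i k_{sz} J₁ + J₄) e^{τ∗ i k_{sz} z}
                    + (τ∗ i k_{cz} J₂ + J₃) e^{τ∗ i k_{cz} z}]·X∗`
satisfies the homogeneous frequency-domain elastic ODE
`(μJ₁+γJ₂)Ĝ'' + (λ+μ)(J₃+J₄)Ĝ' + (μ k_{sz}²(J₁+J₂) + (λ+μ)J₅)Ĝ = 0`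
for all `z`. -/
theorem general_solution_elastic_ODE
    (ω ρ lam μ γ : ℂ) (hω : ω ≠ 0) (hρ : ρ ≠ 0) (hlam : lam ≠ 0) (hμ : μ ≠ 0)
    (hγ : γ = lam + 2*μ)
    (kx ky ks2 kc2 ksz kcz : ℂ)
    (hks : μ * ks2 = ω^2 * ρ) (hkc : γ * kc2 = ω^2 * ρ)
    (hksz : ksz^2 = ks2 - (kx^2 + ky^2)) (hkcz : kcz^2 = kc2 - (kx^2 + ky^2))
    (Xup Xdn : Matrix (Fin 3) (Fin 3) ℂ) (G : ℝ → Matrix (Fin 3) (Fin 3) ℂ)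
    (hG : ∀ z : ℝ, G z =
      Complex.exp (Complex.I * ksz * z) •
        (((-(Complex.I * ksz)) • Jm kx ky Complex.I 0 + Jm kx ky Complex.I 3) * Xup)
      + Complex.exp (Complex.I * kcz * z) •
        (((Complex.I * kcz) • Jm kx ky Complex.I 1 + Jm kx ky Complex.I 2) * Xup)
      + Complex.exp (-(Complex.I * ksz * z)) •
        (((Complex.I * ksz) • Jm kx ky Complex.I 0 + Jm kx ky Complex.I 3) * Xdn)
      + Complex.exp (-(Complex.I * kcz * z)) •
        (((-(Complex.I * kcz)) • Jm kx ky Complex.I 1 + Jm kx ky Complex.I 2) * Xdn)) :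
    ∀ z : ℝ,
      (μ • Jm kx ky Complex.I 0 + γ • Jm kx ky Complex.I 1) *
          (Matrix.of fun a b => deriv (fun t => deriv (fun u => G u a b) t) z)
        + (lam + μ) • ((Jm kx ky Complex.I 2 + Jm kx ky Complex.I 3) *
            (Matrix.of fun a b => deriv (fun t => G t a b) z))
        + ((μ * ksz^2) • (Jm kx ky Complex.I 0 + Jm kx ky Complex.I 1)
            + (lam + μ) • Jm kx ky Complex.I 4) * G z = 0 := by

  subst hγ
  have f1 : μ*ksz^2 - (lam+2*μ)*kcz^2 - (lam+μ)*(kx^2+ky^2) = 0 := by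
    linear_combination μ*hksz - (lam+2*μ)*hkcz + hks - hkc
  have f2 : μ*ksz^2 - μ*kcz^2 - (lam+μ)*(kcz^2+kx^2+ky^2) = 0 := by
    linear_combination μ*hksz - (lam+2*μ)*hkcz + hks - hkc
  have hc1 : (Complex.I * ksz)^2 = -(ksz^2) := by rw [mul_pow, Complex.I_sq]; ring
  have hc2 : (Complex.I * kcz)^2 = -(kcz^2) := by rw [mul_pow, Complex.I_sq]; ring
  have hc3 : (-(Complex.I * ksz))^2 = -(ksz^2) := by rw [neg_sq]; exact hc1
  have hc4 : (-(Complex.I * kcz))^2 = -(kcz^2) := by rw [neg_sq]; exact hc2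
  have hcoreS1 := coreS kx ky ksz lam μ (Complex.I * ksz) hc1
  have hcoreS3 := coreS kx ky ksz lam μ (-(Complex.I * ksz)) hc3
  rw [neg_neg] at hcoreS3
  have hcoreP2 := coreP kx ky ksz kcz lam μ (lam+2*μ) (Complex.I * kcz) hc2 f1 f2
  have hcoreP4 := coreP kx ky ksz kcz lam μ (lam+2*μ) (-(Complex.I * kcz)) hc4 f1 f2
  have hGe : ∀ t : ℝ, G t = Complex.exp ((Complex.I * ksz) * t) • (((-(Complex.I * ksz)) • Jm kx ky Complex.I 0 + Jm kx ky Complex.I 3) * Xup) + Complex.exp ((Complex.I * kcz) * t) • (((Complex.I * kcz) • Jm kx ky Complex.I 1 + Jm kx ky Complex.I 2) * Xup) + Complex.exp ((-(Complex.I * ksz)) * t) • (((Complex.I * ksz) • Jm kx ky Complex.I 0 + Jm kx ky Complex.I 3) * Xdn) + Complex.exp ((-(Complex.I * kcz)) * t) • (((-(Complex.I * kcz)) • Jm kx ky Complex.I 1 + Jm kx ky Complex.I 2) * Xdn) := by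
    intro t
    rw [hG t]
    simp only [neg_mul]
  have hd1 : ∀ (a b : Fin 3) (t : ℝ), HasDerivAt (fun u : ℝ => G u a b)
      ((Complex.I * ksz) * Complex.exp ((Complex.I * ksz) * t) * (((-(Complex.I * ksz)) • Jm kx ky Complex.I 0 + Jm kx ky Complex.I 3) * Xup) a b + (Complex.I * kcz) * Complex.exp ((Complex.I * kcz) * t) * (((Complex.I * kcz) • Jm kx ky Complex.I 1 + Jm kx ky Complex.I 2) * Xup) a b
        + (-(Complex.I * ksz)) * Complex.exp ((-(Complex.I * ksz)) * t) * (((Complex.I * ksz) • Jm kx ky Complex.I 0 + Jm kx ky Complex.I 3) * Xdn) a b + (-(Complex.I * kcz)) * Complex.exp ((-(Complex.I * kcz)) * t) * (((-(Complex.I * kcz)) • Jm kx ky Complex.I 1 + Jm kx ky Complex.I 2) * Xdn) a b) t := by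
    intro a b t
    have hfun : (fun u : ℝ => G u a b)
        = fun u : ℝ => Complex.exp ((Complex.I * ksz) * u) * (((-(Complex.I * ksz)) • Jm kx ky Complex.I 0 + Jm kx ky Complex.I 3) * Xup) a b + Complex.exp ((Complex.I * kcz) * u) * (((Complex.I * kcz) • Jm kx ky Complex.I 1 + Jm kx ky Complex.I 2) * Xup) a b + Complex.exp ((-(Complex.I * ksz)) * u) * (((Complex.I * ksz) • Jm kx ky Complex.I 0 + Jm kx ky Complex.I 3) * Xdn) a b + Complex.exp ((-(Complex.I * kcz)) * u) * (((-(Complex.I * kcz)) • Jm kx ky Complex.I 1 + Jm kx ky Complex.I 2) * Xdn) a b := by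
      funext u
      rw [hGe u]
      simp [Matrix.add_apply, Matrix.smul_apply, smul_eq_mul]
    rw [hfun]
    exact ((((hexp' _ t).mul_const _).add ((hexp' _ t).mul_const _)).add
      ((hexp' _ t).mul_const _)).add ((hexp' _ t).mul_const _)
  have hD1 : ∀ z : ℝ, (Matrix.of fun a b => deriv (fun t => G t a b) z)
      = ((Complex.I * ksz) * Complex.exp ((Complex.I * ksz) * z)) • (((-(Complex.I * ksz)) • Jm kx ky Complex.I 0 + Jm kx ky Complex.I 3) * Xup) + ((Complex.I * kcz) * Complex.exp ((Complex.I * kcz) * z)) • (((Complex.I * kcz) • Jm kx ky Complex.I 1 + Jm kx ky Complex.I 2) * Xup) + ((-(Complex.I * ksz)) * Complex.exp ((-(Complex.I * ksz)) * z)) • (((Complex.I * ksz) • Jm kx ky Complex.I 0 + Jm kx ky Complex.I 3) * Xdn) + ((-(Complex.I * kcz)) * Complex.exp ((-(Complex.I * kcz)) * z)) • (((-(Complex.I * kcz)) • Jm kx ky Complex.I 1 + Jm kx ky Complex.I 2) * Xdn) := by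
    intro z
    ext a b
    simp only [Matrix.of_apply, Matrix.add_apply, Matrix.smul_apply, smul_eq_mul]
    exact (hd1 a b z).deriv
  have hd2 : ∀ (a b : Fin 3) (t : ℝ), HasDerivAt (fun u : ℝ => deriv (fun v : ℝ => G v a b) u)
      ((Complex.I * ksz) * ((Complex.I * ksz) * Complex.exp ((Complex.I * ksz) * t)) * (((-(Complex.I * ksz)) • Jm kx ky Complex.I 0 + Jm kx ky Complex.I 3) * Xup) a b + (Complex.I * kcz) * ((Complex.I * kcz) * Complex.exp ((Complex.I * kcz) * t)) * (((Complex.I * kcz) • Jm kx ky Complex.I 1 + Jm kx ky Complex.I 2) * Xup) a b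
        + (-(Complex.I * ksz)) * ((-(Complex.I * ksz)) * Complex.exp ((-(Complex.I * ksz)) * t)) * (((Complex.I * ksz) • Jm kx ky Complex.I 0 + Jm kx ky Complex.I 3) * Xdn) a b + (-(Complex.I * kcz)) * ((-(Complex.I * kcz)) * Complex.exp ((-(Complex.I * kcz)) * t)) * (((-(Complex.I * kcz)) • Jm kx ky Complex.I 1 + Jm kx ky Complex.I 2) * Xdn) a b) t := by
    intro a b t
    have hfun : (fun u : ℝ => deriv (fun v : ℝ => G v a b) u)
        = fun u : ℝ => (Complex.I * ksz) * Complex.exp ((Complex.I * ksz) * u) * (((-(Complex.I * ksz)) • Jm kx ky Complex.I 0 + Jm kx ky Complex.I 3) * Xup) a b + (Complex.I * kcz) * Complex.exp ((Complex.I * kcz) * u) * (((Complex.I * kcz) • Jm kx ky Complex.I 1 + Jm kx ky Complex.I 2) * Xup) a b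
            + (-(Complex.I * ksz)) * Complex.exp ((-(Complex.I * ksz)) * u) * (((Complex.I * ksz) • Jm kx ky Complex.I 0 + Jm kx ky Complex.I 3) * Xdn) a b + (-(Complex.I * kcz)) * Complex.exp ((-(Complex.I * kcz)) * u) * (((-(Complex.I * kcz)) • Jm kx ky Complex.I 1 + Jm kx ky Complex.I 2) * Xdn) a b :=
      funext fun u => (hd1 a b u).deriv
    rw [hfun]
    exact (((((hexp' _ t).const_mul _).mul_const _).add (((hexp' _ t).const_mul _).mul_const _)).add
      (((hexp' _ t).const_mul _).mul_const _)).add (((hexp' _ t).const_mul _).mul_const _)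
  have hD2 : ∀ z : ℝ, (Matrix.of fun a b => deriv (fun t => deriv (fun u => G u a b) t) z)
      = ((Complex.I * ksz)^2 * Complex.exp ((Complex.I * ksz) * z)) • (((-(Complex.I * ksz)) • Jm kx ky Complex.I 0 + Jm kx ky Complex.I 3) * Xup) + ((Complex.I * kcz)^2 * Complex.exp ((Complex.I * kcz) * z)) • (((Complex.I * kcz) • Jm kx ky Complex.I 1 + Jm kx ky Complex.I 2) * Xup) + ((-(Complex.I * ksz))^2 * Complex.exp ((-(Complex.I * ksz)) * z)) • (((Complex.I * ksz) • Jm kx ky Complex.I 0 + Jm kx ky Complex.I 3) * Xdn) + ((-(Complex.I * kcz))^2 * Complex.exp ((-(Complex.I * kcz)) * z)) • (((-(Complex.I * kcz)) • Jm kx ky Complex.I 1 + Jm kx ky Complex.I 2) * Xdn) := by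
    intro z
    ext a b
    simp only [Matrix.of_apply, Matrix.add_apply, Matrix.smul_apply, smul_eq_mul]
    rw [(hd2 a b z).deriv]
    ring
  intro z
  rw [hD2 z, hD1 z, hGe z]
  have T1 := combo' (μ • Jm kx ky Complex.I 0 + (lam + 2*μ) • Jm kx ky Complex.I 1) (Jm kx ky Complex.I 2 + Jm kx ky Complex.I 3) ((μ * ksz^2) • (Jm kx ky Complex.I 0 + Jm kx ky Complex.I 1) + (lam + μ) • Jm kx ky Complex.I 4) ((-(Complex.I * ksz)) • Jm kx ky Complex.I 0 + Jm kx ky Complex.I 3) Xup (lam+μ) (Complex.I * ksz) (Complex.exp ((Complex.I * ksz) * z)) hcoreS1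
  have T2 := combo' (μ • Jm kx ky Complex.I 0 + (lam + 2*μ) • Jm kx ky Complex.I 1) (Jm kx ky Complex.I 2 + Jm kx ky Complex.I 3) ((μ * ksz^2) • (Jm kx ky Complex.I 0 + Jm kx ky Complex.I 1) + (lam + μ) • Jm kx ky Complex.I 4) ((Complex.I * kcz) • Jm kx ky Complex.I 1 + Jm kx ky Complex.I 2) Xup (lam+μ) (Complex.I * kcz) (Complex.exp ((Complex.I * kcz) * z)) hcoreP2
  have T3 := combo' (μ • Jm kx ky Complex.I 0 + (lam + 2*μ) • Jm kx ky Complex.I 1) (Jm kx ky Complex.I 2 + Jm kx ky Complex.I 3) ((μ * ksz^2) • (Jm kx ky Complex.I 0 + Jm kx ky Complex.I 1) + (lam + μ) • Jm kx ky Complex.I 4) ((Complex.I * ksz) • Jm kx ky Complex.I 0 + Jm kx ky Complex.I 3) Xdn (lam+μ) (-(Complex.I * ksz)) (Complex.exp ((-(Complex.I * ksz)) * z)) hcoreS3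
  have T4 := combo' (μ • Jm kx ky Complex.I 0 + (lam + 2*μ) • Jm kx ky Complex.I 1) (Jm kx ky Complex.I 2 + Jm kx ky Complex.I 3) ((μ * ksz^2) • (Jm kx ky Complex.I 0 + Jm kx ky Complex.I 1) + (lam + μ) • Jm kx ky Complex.I 4) ((-(Complex.I * kcz)) • Jm kx ky Complex.I 1 + Jm kx ky Complex.I 2) Xdn (lam+μ) (-(Complex.I * kcz)) (Complex.exp ((-(Complex.I * kcz)) * z)) hcoreP4
  calc (μ • Jm kx ky Complex.I 0 + (lam + 2*μ) • Jm kx ky Complex.I 1) * (((Complex.I * ksz)^2 * Complex.exp ((Complex.I * ksz) * z)) • (((-(Complex.I * ksz)) • Jm kx ky Complex.I 0 + Jm kx ky Complex.I 3) * Xup) + ((Complex.I * kcz)^2 * Complex.exp ((Complex.I * kcz) * z)) • (((Complex.I * kcz) • Jm kx ky Complex.I 1 + Jm kx ky Complex.I 2) * Xup) + ((-(Complex.I * ksz))^2 * Complex.exp ((-(Complex.I * ksz)) * z)) • (((Complex.I * ksz) • Jm kx ky Complex.I 0 + Jm kx ky Complex.I 3) * Xdn) + ((-(Complex.I * kcz))^2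 * Complex.exp ((-(Complex.I * kcz)) * z)) • (((-(Complex.I * kcz)) • Jm kx ky Complex.I 1 + Jm kx ky Complex.I 2) * Xdn))
        + (lam + μ) • ((Jm kx ky Complex.I 2 + Jm kx ky Complex.I 3) * (((Complex.I * ksz) * Complex.exp ((Complex.I * ksz) * z)) • (((-(Complex.I * ksz)) • Jm kx ky Complex.I 0 + Jm kx ky Complex.I 3) * Xup) + ((Complex.I * kcz) * Complex.exp ((Complex.I * kcz) * z)) • (((Complex.I * kcz) • Jm kx ky Complex.I 1 + Jm kx ky Complex.I 2) * Xup) + ((-(Complex.I * ksz)) * Complex.exp ((-(Complex.I * ksz)) * z)) • (((Complex.I * ksz) • Jm kx ky Complex.I 0 + Jm kx ky Complex.I 3) * Xdn) + ((-(Complex.I * kcz)) * Complex.exp ((-(Complex.I * kcz)) * z)) • (((-(Complex.I * kcz)) • Jm kx ky Complex.I 1 + Jm kx ky Complex.I 2) * Xdn)))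
        + ((μ * ksz^2) • (Jm kx ky Complex.I 0 + Jm kx ky Complex.I 1) + (lam + μ) • Jm kx ky Complex.I 4) * (Complex.exp ((Complex.I * ksz) * z) • (((-(Complex.I * ksz)) • Jm kx ky Complex.I 0 + Jm kx ky Complex.I 3) * Xup) + Complex.exp ((Complex.I * kcz) * z) • (((Complex.I * kcz) • Jm kx ky Complex.I 1 + Jm kx ky Complex.I 2) * Xup) + Complex.exp ((-(Complex.I * ksz)) * z) • (((Complex.I * ksz) • Jm kx ky Complex.I 0 + Jm kx ky Complex.I 3) * Xdn) + Complex.exp ((-(Complex.I * kcz)) * z) • (((-(Complex.I * kcz)) • Jm kx ky Complex.I 1 + Jm kx ky Complex.I 2) * Xdn))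
      = ((μ • Jm kx ky Complex.I 0 + (lam + 2*μ) • Jm kx ky Complex.I 1) * (((Complex.I * ksz)^2 * Complex.exp ((Complex.I * ksz) * z)) • (((-(Complex.I * ksz)) • Jm kx ky Complex.I 0 + Jm kx ky Complex.I 3) * Xup)) + (lam + μ) • ((Jm kx ky Complex.I 2 + Jm kx ky Complex.I 3) * (((Complex.I * ksz) * Complex.exp ((Complex.I * ksz) * z)) • (((-(Complex.I * ksz)) • Jm kx ky Complex.I 0 + Jm kx ky Complex.I 3) * Xup))) + ((μ * ksz^2) • (Jm kx ky Complex.I 0 + Jm kx ky Complex.I 1) + (lam + μ) • Jm kx ky Complex.I 4) * (Complex.exp ((Complex.I * ksz) * z) • (((-(Complex.I * ksz)) • Jm kx ky Complex.I 0 + Jm kx ky Complex.I 3) * Xup)))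
        + ((μ • Jm kx ky Complex.I 0 + (lam + 2*μ) • Jm kx ky Complex.I 1) * (((Complex.I * kcz)^2 * Complex.exp ((Complex.I * kcz) * z)) • (((Complex.I * kcz) • Jm kx ky Complex.I 1 + Jm kx ky Complex.I 2) * Xup)) + (lam + μ) • ((Jm kx ky Complex.I 2 + Jm kx ky Complex.I 3) * (((Complex.I * kcz) * Complex.exp ((Complex.I * kcz) * z)) • (((Complex.I * kcz) • Jm kx ky Complex.I 1 + Jm kx ky Complex.I 2) * Xup))) + ((μ * ksz^2) • (Jm kx ky Complex.I 0 + Jm kx ky Complex.I 1) + (lam + μ) • Jm kx ky Complex.I 4) * (Complex.exp ((Complex.I * kcz) * z) • (((Complex.I * kcz) • Jm kx ky Complex.I 1 + Jm kx ky Complex.I 2) * Xup)))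
        + ((μ • Jm kx ky Complex.I 0 + (lam + 2*μ) • Jm kx ky Complex.I 1) * (((-(Complex.I * ksz))^2 * Complex.exp ((-(Complex.I * ksz)) * z)) • (((Complex.I * ksz) • Jm kx ky Complex.I 0 + Jm kx ky Complex.I 3) * Xdn)) + (lam + μ) • ((Jm kx ky Complex.I 2 + Jm kx ky Complex.I 3) * (((-(Complex.I * ksz)) * Complex.exp ((-(Complex.I * ksz)) * z)) • (((Complex.I * ksz) • Jm kx ky Complex.I 0 + Jm kx ky Complex.I 3) * Xdn))) + ((μ * ksz^2) • (Jm kx ky Complex.I 0 + Jm kx ky Complex.I 1) + (lam + μ) • Jm kx ky Complex.I 4) * (Complex.exp ((-(Complex.I * ksz)) * z) • (((Complex.I * ksz) • Jm kx ky Complex.I 0 + Jm kx ky Complex.I 3) * Xdn)))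
        + ((μ • Jm kx ky Complex.I 0 + (lam + 2*μ) • Jm kx ky Complex.I 1) * (((-(Complex.I * kcz))^2 * Complex.exp ((-(Complex.I * kcz)) * z)) • (((-(Complex.I * kcz)) • Jm kx ky Complex.I 1 + Jm kx ky Complex.I 2) * Xdn)) + (lam + μ) • ((Jm kx ky Complex.I 2 + Jm kx ky Complex.I 3) * (((-(Complex.I * kcz)) * Complex.exp ((-(Complex.I * kcz)) * z)) • (((-(Complex.I * kcz)) • Jm kx ky Complex.I 1 + Jm kx ky Complex.I 2) * Xdn))) + ((μ * ksz^2) • (Jm kx ky Complex.I 0 + Jm kx ky Complex.I 1) + (lam + μ) • Jm kx ky Complex.I 4) * (Complex.exp ((-(Complex.I * kcz)) * z) • (((-(Complex.I * kcz)) • Jm kx ky Complex.I 1 + Jm kx ky Complex.I 2) * Xdn))) := by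
        simp only [Matrix.mul_add, smul_add]
        abel
    _ = 0 := by rw [T1, T2, T3, T4]; simp
end
end
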